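/- Under the uplink pilot model, with c_j := √(τp)·β_j/(1 + τp·Σ_{i=1}^K β_i) and θ_j := τp·β_j²/(1 + τp·Σ_{i=1}^K β_i), the channel-estimation error satisfies E[‖h_j − c_j·ỹ‖²] = L·(β_j − θ_j). -/

import Mathlib

/-!
Coordinatewise, the estimation error `h_j − c ỹ` is a real linear combination of the
independent centred complex Gaussians `h_{1,i}, …, h_{K,i}, n_i`. Its real and imaginary parts are
then sums of independent centred real Gaussians, so by additivity of variance its mean square is
the sum of the squared coefficients weighted by the variances `β_1, …, β_K, 1`. For the value of
`c` this weighted sum collapses to `β_j − θ_j`.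
-/

open MeasureTheory ProbabilityTheory
open scoped BigOperators ComplexConjugate

noncomputable section

/-- `IsCNVec L θ z` means `z` is a complex Gaussian random vector `CN(0, θ I_L)`. -/
def IsCNVec {Ω : Type} [MeasureSpace Ω] (L : ℕ) (θ : ℝ) (z : Ω → Fin L → ℂ) : Prop :=
  (∀ i, Measurable fun ω => z ω i) ∧
  iIndepFun (fun i ω => z ω i) (volume : Measure Ω) ∧
  (∀ i, IndepFun (fun ω => (z ω i).re) (fun ω => (z ω i).im) (volume : Measure Ω)) ∧
  (∀ i, Measure.map (fun ω => (z ω i).re) (volume : Measure Ω)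
      = gaussianReal 0 (θ / 2).toNNReal) ∧
  (∀ i, Measure.map (fun ω => (z ω i).im) (volume : Measure Ω)
      = gaussianReal 0 (θ / 2).toNNReal)

open scoped NNReal

namespace ProbabilityTheory

variable {Ω : Type*} {mΩ : MeasurableSpace Ω} {P : Measure Ω}

section Real

variable {X : Ω → ℝ} {m : ℝ} {v : ℝ≥0}

lemma HasLaw.memLp_two_of_gaussianReal (hX : HasLaw X (gaussianReal m v) P) : MemLp X 2 P :=
  (memLp_map_measure_iff aestronglyMeasurable_id hX.aemeasurable).1
    (hX.map_eq ▸ memLp_id_gaussianReal 2)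

lemma HasLaw.integral_eq_of_gaussianReal (hX : HasLaw X (gaussianReal m v) P) : P[X] = m := by
  rw [hX.integral_eq, integral_id_gaussianReal]

lemma HasLaw.variance_eq_of_gaussianReal (hX : HasLaw X (gaussianReal m v) P) :
    Var[X; P] = v := by
  rw [hX.variance_eq, variance_id_gaussianReal]

lemma integral_sq_sum_const_mul_of_pairwise_indepFun [IsFiniteMeasure P] {ι : Type*} [Fintype ι]
    {X : ι → Ω → ℝ} (hX : ∀ u, MemLp (X u) 2 P) (hmean : ∀ u, P[X u] = 0)
    (hindep : Pairwise fun u w => X u ⟂ᵢ[P] X w) (a : ι → ℝ) :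
    ∫ ω, (∑ u, a u * X u ω) ^ 2 ∂P = ∑ u, a u ^ 2 * Var[X u; P] := by
  set Y : ι → Ω → ℝ := fun u ω => a u * X u ω
  have hY : ∀ u, MemLp (Y u) 2 P := fun u => (hX u).const_mul (a u)
  have hmean_sum : P[∑ u, Y u] = 0 := by
    simp only [Finset.sum_apply]
    rw [integral_finsetSum _ fun u _ => (hY u).integrable one_le_two]
    simp [Y, integral_const_mul, hmean]
  calc ∫ ω, (∑ u, a u * X u ω) ^ 2 ∂P = ∫ ω, (∑ u, Y u) ω ^ 2 ∂P := by simp [Y]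
    _ = Var[∑ u, Y u; P] := (variance_of_integral_eq_zero
      (memLp_finsetSum' _ fun u _ => hY u).aemeasurable hmean_sum).symm
    _ = ∑ u, a u ^ 2 * Var[X u; P] := by
      rw [IndepFun.variance_sum (fun u _ => hY u) fun u _ w _ huw =>
        (hindep huw).comp (measurable_const_mul (a u)) (measurable_const_mul (a w))]
      simp only [Y, variance_const_mul]

end Real

section Complex

lemma _root_.Complex.normSq_sum_ofReal_mul {ι : Type*} (s : Finset ι) (a : ι → ℝ) (z : ι → ℂ) :
    Complex.normSq (∑ u ∈ s, (a u : ℂ) * z u)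
      = (∑ u ∈ s, a u * (z u).re) ^ 2 + (∑ u ∈ s, a u * (z u).im) ^ 2 := by
  simp [Complex.normSq_apply, Complex.re_sum, Complex.im_sum, sq]

variable {ι : Type*} [Fintype ι] {Z : ι → Ω → ℂ} {θ : ι → ℝ}

lemma integrable_normSq_sum_ofReal_mul
    (hre : ∀ u, HasLaw (fun ω => (Z u ω).re) (gaussianReal 0 (θ u / 2).toNNReal) P)
    (him : ∀ u, HasLaw (fun ω => (Z u ω).im) (gaussianReal 0 (θ u / 2).toNNReal) P)
    (a : ι → ℝ) :
    Integrable (fun ω => Complex.normSq (∑ u, (a u : ℂ) * Z u ω)) P := by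
  simp only [Complex.normSq_sum_ofReal_mul]
  exact (memLp_finsetSum _ fun u _ =>
      (hre u).memLp_two_of_gaussianReal.const_mul (a u)).integrable_sq.add
    (memLp_finsetSum _ fun u _ => (him u).memLp_two_of_gaussianReal.const_mul (a u)).integrable_sq

lemma integral_normSq_sum_ofReal_mul [IsFiniteMeasure P] (hθ : ∀ u, 0 ≤ θ u)
    (hre : ∀ u, HasLaw (fun ω => (Z u ω).re) (gaussianReal 0 (θ u / 2).toNNReal) P)
    (him : ∀ u, HasLaw (fun ω => (Z u ω).im) (gaussianReal 0 (θ u / 2).toNNReal) P)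
    (hindep : Pairwise fun u w => Z u ⟂ᵢ[P] Z w) (a : ι → ℝ) :
    ∫ ω, Complex.normSq (∑ u, (a u : ℂ) * Z u ω) ∂P = ∑ u, a u ^ 2 * θ u := by
  have hX := fun u => (hre u).memLp_two_of_gaussianReal
  have hY := fun u => (him u).memLp_two_of_gaussianReal
  have hsq_re := integral_sq_sum_const_mul_of_pairwise_indepFun hX
    (fun u => (hre u).integral_eq_of_gaussianReal)
    (fun u w huw => (hindep huw).comp Complex.measurable_re Complex.measurable_re) a
  have hsq_im := integral_sq_sum_const_mul_of_pairwise_indepFun hY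
    (fun u => (him u).integral_eq_of_gaussianReal)
    (fun u w huw => (hindep huw).comp Complex.measurable_im Complex.measurable_im) a
  simp only [Complex.normSq_sum_ofReal_mul]
  rw [integral_add (memLp_finsetSum _ fun u _ => (hX u).const_mul (a u)).integrable_sq
    (memLp_finsetSum _ fun u _ => (hY u).const_mul (a u)).integrable_sq,
    hsq_re, hsq_im, ← Finset.sum_add_distrib]
  refine Finset.sum_congr rfl fun u _ => ?_
  rw [(hre u).variance_eq_of_gaussianReal, (him u).variance_eq_of_gaussianReal,
    Real.coe_toNNReal _ (by linarith [hθ u])]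
  ring

end Complex

end ProbabilityTheory

section IsCNVec

variable {Ω : Type} [MeasureSpace Ω] {L : ℕ}

lemma IsCNVec.hasLaw_re {θ : ℝ} {z : Ω → Fin L → ℂ} (hz : IsCNVec L θ z) (i : Fin L) :
    HasLaw (fun ω => (z ω i).re) (gaussianReal 0 (θ / 2).toNNReal) :=
  ⟨(Complex.measurable_re.comp (hz.1 i)).aemeasurable, hz.2.2.2.1 i⟩

lemma IsCNVec.hasLaw_im {θ : ℝ} {z : Ω → Fin L → ℂ} (hz : IsCNVec L θ z) (i : Fin L) :
    HasLaw (fun ω => (z ω i).im) (gaussianReal 0 (θ / 2).toNNReal) :=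
  ⟨(Complex.measurable_im.comp (hz.1 i)).aemeasurable, hz.2.2.2.2 i⟩

lemma integral_sum_normSq_sum_ofReal_mul_of_isCNVec [IsFiniteMeasure (volume : Measure Ω)]
    {ι : Type*} [Fintype ι] {z : ι → Ω → Fin L → ℂ} {θ : ι → ℝ} (hθ : ∀ u, 0 ≤ θ u)
    (hz : ∀ u, IsCNVec L (θ u) (z u)) (hindep : Pairwise fun u w => z u ⟂ᵢ z w) (a : ι → ℝ) :
    ∫ ω, ∑ i, Complex.normSq (∑ u, (a u : ℂ) * z u ω i) = L * ∑ u, a u ^ 2 * θ u := by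
  rw [integral_finsetSum _ fun i _ => integrable_normSq_sum_ofReal_mul
    (fun u => (hz u).hasLaw_re i) (fun u => (hz u).hasLaw_im i) a]
  simp only [integral_normSq_sum_ofReal_mul hθ (fun u => (hz u).hasLaw_re _)
      (fun u => (hz u).hasLaw_im _)
      (fun u w huw => (hindep huw).comp (measurable_pi_apply _) (measurable_pi_apply _)),
    Finset.sum_const, Finset.card_univ, Fintype.card_fin, nsmul_eq_mul]

end IsCNVec

section PilotError

variable {ι : Type*} [Fintype ι] [DecidableEq ι]

def pilotErrorCoeff (j : ι) (c s : ℝ) : ι ⊕ Unit → ℝ :=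
  Sum.elim (fun k => (Pi.single j 1 : ι → ℝ) k - c * s) fun _ => -c

lemma sub_mul_pilot_eq_sum_pilotErrorCoeff (x : ι → ℂ) (y : ℂ) (j : ι) (c s : ℝ) :
    x j - c * (s * ∑ k, x k + y)
      = ∑ u, (pilotErrorCoeff j c s u : ℂ) * Sum.elim x (fun _ => y) u := by
  have hk : ∀ k, (((Pi.single j 1 : ι → ℝ) k - c * s : ℝ) : ℂ) * x k
      = (Pi.single j (x j) : ι → ℂ) k - c * (s * x k) := by
    intro k
    rcases eq_or_ne k j with rfl | hkj
    · simp; ring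
    · simp [hkj]; ring
  simp only [pilotErrorCoeff, Fintype.sum_sum_type, Sum.elim_inl, Sum.elim_inr, hk,
    Finset.sum_sub_distrib, Finset.sum_pi_single', Finset.mem_univ, if_true, ← Finset.mul_sum,
    Finset.univ_unique, Finset.sum_singleton]
  push_cast
  ring

lemma sum_pilotErrorCoeff_sq_mul (β : ι → ℝ) (j : ι) (c s : ℝ) :
    ∑ u, pilotErrorCoeff j c s u ^ 2 * Sum.elim β (fun _ => 1) u
      = (1 - 2 * (c * s)) * β j + (c * s) ^ 2 * ∑ k, β k + c ^ 2 := by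
  have hk : ∀ k, ((Pi.single j 1 : ι → ℝ) k - c * s) ^ 2 * β k
      = (Pi.single j ((1 - 2 * (c * s)) * β j) : ι → ℝ) k + (c * s) ^ 2 * β k := by
    intro k
    rcases eq_or_ne k j with rfl | hkj
    · simp; ring
    · simp [hkj]
  simp only [pilotErrorCoeff, Fintype.sum_sum_type, Sum.elim_inl, Sum.elim_inr, hk,
    Finset.sum_add_distrib, Finset.sum_pi_single', Finset.mem_univ, if_true, ← Finset.mul_sum,
    Finset.univ_unique, Finset.sum_singleton]
  ring

end PilotError

lemma mmse_error_variance_eq {τ b B c : ℝ} (hτ : 0 ≤ τ) (hD : 1 + τ * B ≠ 0)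
    (hc : c = √τ * b / (1 + τ * B)) :
    (1 - 2 * (c * √τ)) * b + (c * √τ) ^ 2 * B + c ^ 2 = b - τ * b ^ 2 / (1 + τ * B) := by
  have hcs : c * √τ = τ * b / (1 + τ * B) := by
    rw [hc, div_mul_eq_mul_div, mul_right_comm, Real.mul_self_sqrt hτ]
  have hc2 : c ^ 2 = τ * b ^ 2 / (1 + τ * B) ^ 2 := by
    rw [hc, div_pow, mul_pow, Real.sq_sqrt hτ]
  rw [hcs, hc2]
  field_simp
  ring

theorem mmse_estimation_error_mean_square_general
    {Ω : Type} [MeasureSpace Ω] [IsProbabilityMeasure (volume : Measure Ω)]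
    (L K : ℕ) (τp : ℝ) (hτp : 0 < τp)
    (β : Fin K → ℝ) (hβ : ∀ k, 0 < β k)
    (h : Fin K → Ω → Fin L → ℂ) (nv : Ω → Fin L → ℂ)
    (hh : ∀ k, IsCNVec L (β k) (h k)) (hn : IsCNVec L 1 nv)
    (hindep : iIndepFun
      (Sum.elim (fun k ω => h k ω) (fun _ ω => nv ω) : Fin K ⊕ Unit → Ω → Fin L → ℂ)
      (volume : Measure Ω))
    (ytil : Ω → Fin L → ℂ)
    (hytil : ∀ ω i, ytil ω i = (Real.sqrt τp : ℂ) * ∑ k, h k ω i + nv ω i)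
    (j : Fin K)
    (c θj : ℝ)
    (hc : c = Real.sqrt τp * β j / (1 + τp * ∑ i, β i))
    (hθj : θj = τp * β j ^ 2 / (1 + τp * ∑ i, β i)) :
    ∫ ω, ∑ i, Complex.normSq (h j ω i - (c : ℂ) * ytil ω i) = (L : ℝ) * (β j - θj) := by
  set z : Fin K ⊕ Unit → Ω → Fin L → ℂ := Sum.elim h fun _ => nv
  set σ : Fin K ⊕ Unit → ℝ := Sum.elim β fun _ => 1
  have hσ : ∀ u, 0 ≤ σ u := by
    rintro (k | _)
    exacts [(hβ k).le, zero_le_one]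
  have hz : ∀ u, IsCNVec L (σ u) (z u) := by
    rintro (k | _)
    exacts [hh k, hn]
  have herr : ∀ ω i, h j ω i - c * ytil ω i
      = ∑ u, (pilotErrorCoeff j c √τp u : ℂ) * z u ω i := fun ω i => by
    rw [hytil, sub_mul_pilot_eq_sum_pilotErrorCoeff (fun k => h k ω i) (nv ω i)]
    exact Finset.sum_congr rfl fun u _ => by cases u <;> rfl
  have hD : 1 + τp * ∑ i, β i ≠ 0 := by
    have := Finset.sum_nonneg fun i (_ : i ∈ Finset.univ) => (hβ i).le
    positivity
  simp only [herr]
  rw [integral_sum_normSq_sum_ofReal_mul_of_isCNVec hσ hz (fun u w huw => hindep.indepFun huw),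
    sum_pilotErrorCoeff_sq_mul, mmse_error_variance_eq hτp.le hD hc, hθj]

/-- Uplink pilot model: the channel-estimation error satisfies
`E[‖h_j − c_j·ỹ‖²] = L·(β_j − θ_j)`. -/
theorem mmse_estimation_error_mean_square
    {Ω : Type} [MeasureSpace Ω] [IsProbabilityMeasure (volume : Measure Ω)]
    (L K : ℕ) (hL : 0 < L) (hK : 0 < K) (τp : ℝ) (hτp : 0 < τp)
    (β : Fin K → ℝ) (hβ : ∀ k, 0 < β k)
    (h : Fin K → Ω → Fin L → ℂ) (nv : Ω → Fin L → ℂ)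
    (hh : ∀ k, IsCNVec L (β k) (h k)) (hn : IsCNVec L 1 nv)
    (hindep : iIndepFun
      (Sum.elim (fun k ω => h k ω) (fun _ ω => nv ω) : Fin K ⊕ Unit → Ω → Fin L → ℂ)
      (volume : Measure Ω))
    (ytil : Ω → Fin L → ℂ)
    (hytil : ∀ ω i, ytil ω i = (Real.sqrt τp : ℂ) * ∑ k, h k ω i + nv ω i)
    (j : Fin K)
    (c θj : ℝ)
    (hc : c = Real.sqrt τp * β j / (1 + τp * ∑ i, β i))
    (hθj : θj = τp * β j ^ 2 / (1 + τp * ∑ i, β i)) :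
    ∫ ω, ∑ i, Complex.normSq (h j ω i - (c : ℂ) * ytil ω i) = (L : ℝ) * (β j - θj) :=
  mmse_estimation_error_mean_square_general L K τp hτp β hβ h nv hh hn hindep ytil hytil j c θj hc
    hθj
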